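/- arXiv:2301.09325 — 6 statements merged into one kernel-verified Lean document; each statement's English description precedes it below -/
import Mathlib

section
/- Let F be a permutation of F_{p^n} and c ∈ F_{p^n}^×. Then for every a, b ∈ F_{p^n}, the number of solutions x of F(cx+a) − cF(x) = b equals the number of solutions y of F^{-1}(cy+b) − cF^{-1}(y) = a. Consequently, the cc-differential uniformity of F equals that of F^{-1}; in particular if F is PccN (resp. APccN) then so is F^{-1}. -/
/-!
Since `F` is a bijection, `y = F x` matches the solutions of `F (c x + a) - c F x = b` with those
of `F⁻¹ (c y + b) - c F⁻¹ y = a`: both say `c F x + b = F (c x + a)`. So the set of counts of `F`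
is that of `F⁻¹` with `(a, b)` swapped. The swap leaves the admissible range (`a ≠ 0` when
`c = 1`) only for `c = 1`, `b = 0`, and then the count is `0` by injectivity, a value that `F⁻¹`
also attains at `(1, 0)`.
-/

section CcDifferential

variable {R : Type*} [Ring R]

noncomputable def ccDiffCount (F : R → R) (c a b : R) : ℕ :=
  Nat.card {x : R // F (c * x + a) - c * F x = b}

def ccDiffSpectrum (F : R → R) (c : R) : Set ℕ :=
  {m | ∃ a b : R, (c = 1 → a ≠ 0) ∧ m = ccDiffCount F c a b}

theorem ccDiffCount_symm (e : R ≃ R) (c a b : R) :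
    ccDiffCount e c a b = ccDiffCount e.symm c b a := by
  refine Nat.card_congr (e.subtypeEquiv fun x => ?_)
  rw [Equiv.symm_apply_apply, sub_eq_iff_eq_add', sub_eq_iff_eq_add', eq_comm,
    Equiv.symm_apply_eq]

theorem ccDiffCount_one_zero_of_injective {F : R → R} (hF : Function.Injective F) {a : R}
    (ha : a ≠ 0) : ccDiffCount F 1 a 0 = 0 := by
  refine Nat.card_eq_zero.mpr (Or.inl ⟨fun ⟨x, hx⟩ => ha ?_⟩)
  rw [one_mul, one_mul, sub_eq_zero] at hx
  exact add_eq_left.mp (hF hx)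

theorem ccDiffSpectrum_subset_symm [Nontrivial R] (e : R ≃ R) (c : R) :
    ccDiffSpectrum e c ⊆ ccDiffSpectrum e.symm c := by
  rintro m ⟨a, b, hadm, rfl⟩
  by_cases hb : c = 1 → b ≠ 0
  · exact ⟨b, a, hb, ccDiffCount_symm e c a b⟩
  · obtain ⟨rfl, rfl⟩ : c = 1 ∧ b = 0 := by tauto
    refine ⟨1, 0, fun _ => one_ne_zero, ?_⟩
    rw [ccDiffCount_one_zero_of_injective e.injective (hadm rfl),
      ccDiffCount_one_zero_of_injective e.symm.injective one_ne_zero]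

theorem ccDiffSpectrum_symm [Nontrivial R] (e : R ≃ R) (c : R) :
    ccDiffSpectrum e.symm c = ccDiffSpectrum e c :=
  (ccDiffSpectrum_subset_symm e.symm c).antisymm (ccDiffSpectrum_subset_symm e c)

end CcDifferential

theorem cc_diff_uniformity_inverse_general
    (K : Type) [Field K]
    (c : K) (F G : K → K)
    (hGF : Function.LeftInverse G F) (hFG : Function.RightInverse G F) :
    (∀ a b : K, Nat.card {x : K // F (c * x + a) - c * F x = b} =
      Nat.card {y : K // G (c * y + b) - c * G y = a}) ∧
    sSup {m : ℕ | ∃ a b : K, (c = 1 → a ≠ 0) ∧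
        m = Nat.card {x : K // F (c * x + a) - c * F x = b}} =
    sSup {m : ℕ | ∃ a b : K, (c = 1 → a ≠ 0) ∧
        m = Nat.card {x : K // G (c * x + a) - c * G x = b}} := by
  let e : K ≃ K := ⟨F, G, hGF, hFG⟩
  exact ⟨ccDiffCount_symm e c, congrArg sSup (ccDiffSpectrum_symm e c).symm⟩

/-- for a permutation F, the cc-difference count of F at (a,b) equals that of
F⁻¹ at (b,a); consequently F and F⁻¹ have the same cc-differential uniformity. -/
theorem cc_diff_uniformity_inverse (p : ℕ) (hp : p.Prime) (n : ℕ) (hn : 0 < n)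
    (K : Type) [Field K] [Fintype K] (hK : Fintype.card K = p ^ n)
    (c : K) (hc : c ≠ 0) (F G : K → K)
    (hGF : Function.LeftInverse G F) (hFG : Function.RightInverse G F) :
    (∀ a b : K, Nat.card {x : K // F (c * x + a) - c * F x = b} =
      Nat.card {y : K // G (c * y + b) - c * G y = a}) ∧
    sSup {m : ℕ | ∃ a b : K, (c = 1 → a ≠ 0) ∧
        m = Nat.card {x : K // F (c * x + a) - c * F x = b}} =
    sSup {m : ℕ | ∃ a b : K, (c = 1 → a ≠ 0) ∧
        m = Nat.card {x : K // G (c * x + a) - c * G x = b}} :=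
  cc_diff_uniformity_inverse_general K c F G hGF hFG
end

section
/- If F, F' : F_{p^n} → F_{p^s} are c-EA equivalent (F' = A₁ ∘ F ∘ A₂ + A₃ with A₁, A₂ c-affine permutations and A₃ a c-affine function), then F and F' are c-CCZ equivalent, i.e., there exists a c-affine permutation of F_{p^n} × F_{p^s} mapping the graph of F onto the graph of F'. -/
/-!
A c-affine map `A` is an additive map `x ↦ A x - A 0` (commuting with multiplication by `c`)
followed by a translation, and such maps are closed under composition, inversion and products.
The map `(x, y) ↦ (A₂⁻¹ x, A₁ y + A₃ (A₂⁻¹ x))` is the product `A₂⁻¹ × A₁` followed by the shear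
`(x, y) ↦ (x, y + A₃ x)`; the first carries the graph of `F` to that of `A₁ ∘ F ∘ A₂`, the second
adds `A₃` to the function whose graph it moves.
-/

section AffineEquivariant

variable {M N P M' N' : Type*} [AddCommGroup M] [AddCommGroup N] [AddCommGroup P]
  [AddCommGroup M'] [AddCommGroup N']

/-- For `φ` and `ψ` multiplication by `c`, this is the paper's c-affine map. -/
structure IsAffineEquivariant (φ : M → M) (ψ : N → N) (f : M → N) : Prop where
  map_add' : ∀ x y, f (x + y) - f 0 = (f x - f 0) + (f y - f 0)
  map_equivariant' : ∀ x, f (φ x) - f 0 = ψ (f x - f 0)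

namespace IsAffineEquivariant

variable {φ : M → M} {ψ : N → N} {χ : P → P} {f : M → N}

def linearPart (hf : IsAffineEquivariant φ ψ f) : M →+ N :=
  AddMonoidHom.mk' (fun x => f x - f 0) hf.map_add'

theorem linearPart_apply (hf : IsAffineEquivariant φ ψ f) (x : M) :
    hf.linearPart x = f x - f 0 := rfl

theorem sub_eq_linearPart (hf : IsAffineEquivariant φ ψ f) (x y : M) :
    f x - f y = hf.linearPart (x - y) := by
  rw [map_sub, linearPart_apply, linearPart_apply, sub_sub_sub_cancel_right]

theorem linearPart_map (hf : IsAffineEquivariant φ ψ f) (x : M) :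
    hf.linearPart (φ x) = ψ (hf.linearPart x) :=
  hf.map_equivariant' x

theorem of_linearPart {L : M →+ N} (hL : ∀ x, f x - f 0 = L x)
    (hLφ : ∀ x, L (φ x) = ψ (L x)) : IsAffineEquivariant φ ψ f where
  map_add' x y := by simp only [hL, map_add]
  map_equivariant' x := by rw [hL, hL, hLφ]

theorem comp {g : N → P} (hg : IsAffineEquivariant ψ χ g) (hf : IsAffineEquivariant φ ψ f) :
    IsAffineEquivariant φ χ (g ∘ f) :=
  of_linearPart (L := hg.linearPart.comp hf.linearPart)
    (fun x => hg.sub_eq_linearPart (f x) (f 0))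
    (fun x => by simp only [AddMonoidHom.comp_apply, linearPart_map])

theorem symm {e : M ≃ N} (he : IsAffineEquivariant φ ψ e) :
    IsAffineEquivariant ψ φ e.symm := by
  have hinj : Function.Injective he.linearPart := by
    intro x y hxy
    simpa only [linearPart_apply, sub_left_inj, e.apply_eq_iff_eq] using hxy
  have key : ∀ u, he.linearPart (e.symm u - e.symm 0) = u := fun u => by
    rw [← sub_eq_linearPart, e.apply_symm_apply, e.apply_symm_apply, sub_zero]
  refine ⟨fun u v => hinj ?_, fun u => hinj ?_⟩
  · rw [key, map_add, key, key]
  · rw [linearPart_map, key, key]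

theorem prodMap {φ' : M' → M'} {ψ' : N' → N'} {g : M' → N'} (hf : IsAffineEquivariant φ ψ f)
    (hg : IsAffineEquivariant φ' ψ' g) :
    IsAffineEquivariant (Prod.map φ φ') (Prod.map ψ ψ') (Prod.map f g) :=
  of_linearPart (L := hf.linearPart.prodMap hg.linearPart)
    (fun _ => rfl)
    (fun x => Prod.ext (hf.linearPart_map x.1) (hg.linearPart_map x.2))

theorem shear {h : M → N} (hh : IsAffineEquivariant φ ψ h) (hψ : ∀ a b, ψ (a + b) = ψ a + ψ b) :
    IsAffineEquivariant (Prod.map φ ψ) (Prod.map φ ψ) (fun X : M × N => (X.1, X.2 + h X.1)) :=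
  of_linearPart (L := (AddMonoidHom.fst M N).prod
      (AddMonoidHom.snd M N + hh.linearPart.comp (AddMonoidHom.fst M N)))
    (fun X => Prod.ext (sub_zero _) (by simp only [Prod.snd_sub, Prod.fst_zero, Prod.snd_zero,
      zero_add, AddMonoidHom.prod_apply, AddMonoidHom.add_apply, AddMonoidHom.coe_snd,
      AddMonoidHom.comp_apply, AddMonoidHom.coe_fst, linearPart_apply, add_sub_assoc]))
    (fun X => Prod.ext rfl (by simp only [AddMonoidHom.prod_apply, AddMonoidHom.add_apply,
      AddMonoidHom.coe_snd, AddMonoidHom.comp_apply, AddMonoidHom.coe_fst, Prod.map_fst,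
      Prod.map_snd, linearPart_map, hψ]))

end IsAffineEquivariant

end AffineEquivariant

section Graph

variable {α β γ : Type*}

theorem shear_bijective [AddGroup β] (h : α → β) :
    Function.Bijective (fun X : α × β => (X.1, X.2 + h X.1)) :=
  (Equiv.prodShear (Equiv.refl α) fun x => Equiv.addRight (h x)).bijective

theorem image_shear_graph [AddGroup β] (G h : α → β) :
    (fun X : α × β => (X.1, X.2 + h X.1)) '' {P | P.2 = G P.1} = {P | P.2 = (G + h) P.1} := by
  ext ⟨x, y⟩
  simp only [Set.mem_image, Set.mem_ofPred_eq, Prod.exists, Prod.mk.injEq, Pi.add_apply]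
  constructor
  · rintro ⟨x, y, rfl, rfl, rfl⟩
    rfl
  · rintro rfl
    exact ⟨x, G x, rfl, rfl, rfl⟩

theorem image_prodMap_graph (e : α ≃ α) (g : β → γ) (G : α → β) :
    Prod.map e.symm g '' {P | P.2 = G P.1} = {P | P.2 = (g ∘ G ∘ e) P.1} := by
  ext ⟨x, z⟩
  simp only [Set.mem_image, Set.mem_ofPred_eq, Prod.exists, Prod.map_apply, Prod.mk.injEq,
    Function.comp_apply]
  constructor
  · rintro ⟨x, y, rfl, rfl, rfl⟩
    rw [e.apply_symm_apply]
  · rintro rfl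
    exact ⟨e x, G (e x), rfl, e.symm_apply_apply x, rfl⟩

end Graph

theorem cEA_implies_cCCZ_general
    (K L F0 : Type) [Field K] [Field L] [Field F0]
    (ι : F0 →+* K) (κ : F0 →+* L) (c : F0)
    (F F' : K → L)
    (A₁ : L → L) (hA₁bij : Function.Bijective A₁)
    (hA₁add : ∀ x y : L, A₁ (x + y) - A₁ 0 = (A₁ x - A₁ 0) + (A₁ y - A₁ 0))
    (hA₁c : ∀ x : L, A₁ (κ c * x) - A₁ 0 = κ c * (A₁ x - A₁ 0))
    (A₂ : K → K) (hA₂bij : Function.Bijective A₂)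
    (hA₂add : ∀ x y : K, A₂ (x + y) - A₂ 0 = (A₂ x - A₂ 0) + (A₂ y - A₂ 0))
    (hA₂c : ∀ x : K, A₂ (ι c * x) - A₂ 0 = ι c * (A₂ x - A₂ 0))
    (A₃ : K → L)
    (hA₃add : ∀ x y : K, A₃ (x + y) - A₃ 0 = (A₃ x - A₃ 0) + (A₃ y - A₃ 0))
    (hA₃c : ∀ x : K, A₃ (ι c * x) - A₃ 0 = κ c * (A₃ x - A₃ 0))
    (hF' : ∀ x : K, F' x = A₁ (F (A₂ x)) + A₃ x) :
    ∃ 𝒜 : K × L → K × L, Function.Bijective 𝒜 ∧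
      (∀ X Y : K × L, 𝒜 (X + Y) - 𝒜 0 = (𝒜 X - 𝒜 0) + (𝒜 Y - 𝒜 0)) ∧
      (∀ X : K × L, 𝒜 (ι c * X.1, κ c * X.2) - 𝒜 0 =
        (ι c * (𝒜 X - 𝒜 0).1, κ c * (𝒜 X - 𝒜 0).2)) ∧
      𝒜 '' {P : K × L | P.2 = F P.1} = {P : K × L | P.2 = F' P.1} := by
  set e₂ := Equiv.ofBijective A₂ hA₂bij
  have hF'eq : A₁ ∘ F ∘ e₂ + A₃ = F' := funext fun x => (hF' x).symm
  have h₁ : IsAffineEquivariant (κ c * ·) (κ c * ·) A₁ := ⟨hA₁add, hA₁c⟩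
  have h₂ : IsAffineEquivariant (ι c * ·) (ι c * ·) e₂ := ⟨hA₂add, hA₂c⟩
  have h₃ : IsAffineEquivariant (ι c * ·) (κ c * ·) A₃ := ⟨hA₃add, hA₃c⟩
  have h𝒜 := (h₃.shear (mul_add (κ c))).comp (h₂.symm.prodMap h₁)
  refine ⟨(fun X : K × L => (X.1, X.2 + A₃ X.1)) ∘ Prod.map e₂.symm A₁,
    (shear_bijective A₃).comp (e₂.symm.bijective.prodMap hA₁bij),
    h𝒜.map_add', h𝒜.map_equivariant', ?_⟩
  rw [Set.image_comp, image_prodMap_graph, image_shear_graph, hF'eq]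

/-- c-EA equivalence implies c-CCZ equivalence. -/
theorem cEA_implies_cCCZ (p n s : ℕ) (hp : p.Prime) (hn : 0 < n) (hs : 0 < s)
    (K L F0 : Type) [Field K] [Fintype K] [Field L] [Fintype L] [Field F0] [Fintype F0]
    (hK : Fintype.card K = p ^ n) (hL : Fintype.card L = p ^ s)
    (hF0 : Fintype.card F0 = p ^ (Nat.gcd n s))
    (ι : F0 →+* K) (κ : F0 →+* L) (c : F0) (hc : c ≠ 0)
    (F F' : K → L)
    (A₁ : L → L) (hA₁bij : Function.Bijective A₁)
    (hA₁add : ∀ x y : L, A₁ (x + y) - A₁ 0 = (A₁ x - A₁ 0) + (A₁ y - A₁ 0))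
    (hA₁c : ∀ x : L, A₁ (κ c * x) - A₁ 0 = κ c * (A₁ x - A₁ 0))
    (A₂ : K → K) (hA₂bij : Function.Bijective A₂)
    (hA₂add : ∀ x y : K, A₂ (x + y) - A₂ 0 = (A₂ x - A₂ 0) + (A₂ y - A₂ 0))
    (hA₂c : ∀ x : K, A₂ (ι c * x) - A₂ 0 = ι c * (A₂ x - A₂ 0))
    (A₃ : K → L)
    (hA₃add : ∀ x y : K, A₃ (x + y) - A₃ 0 = (A₃ x - A₃ 0) + (A₃ y - A₃ 0))
    (hA₃c : ∀ x : K, A₃ (ι c * x) - A₃ 0 = κ c * (A₃ x - A₃ 0))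
    (hF' : ∀ x : K, F' x = A₁ (F (A₂ x)) + A₃ x) :
    ∃ 𝒜 : K × L → K × L, Function.Bijective 𝒜 ∧
      (∀ X Y : K × L, 𝒜 (X + Y) - 𝒜 0 = (𝒜 X - 𝒜 0) + (𝒜 Y - 𝒜 0)) ∧
      (∀ X : K × L, 𝒜 (ι c * X.1, κ c * X.2) - 𝒜 0 =
        (ι c * (𝒜 X - 𝒜 0).1, κ c * (𝒜 X - 𝒜 0).2)) ∧
      𝒜 '' {P : K × L | P.2 = F P.1} = {P : K × L | P.2 = F' P.1} :=
  cEA_implies_cCCZ_general K L F0 ι κ c F F' A₁ hA₁bij hA₁add hA₁c A₂ hA₂bij hA₂add hA₂c A₃ hA₃add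
    hA₃c hF'
end

section
/- Let F, F' : F_{p^n} → F_{p^s} with F' = A₁ ∘ F ∘ A₂, where A₁ : F_{p^s} → F_{p^s} is a c-affine permutation and A₂ : F_{p^n} → F_{p^n} is an affine permutation. Then for every a ∈ F_{p^n}, b ∈ F_{p^s}, the maximum over (a,b) (with a ≠ 0 if c = 1) of #{x : F'(x+a) − cF'(x) = b} equals the corresponding maximum for F; i.e., F and F' have equal c-differential uniformity. -/
/-!
Composing `F` with the affine permutation `A₂` on the input and the `c`-affine permutation `A₁`
on the output only reindexes the equations `F (x + a) - c F x = b`: substituting `x ↦ A₂ x`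
turns the shift `a` into `A₂ a - A₂ 0`, and because the linear part of `A₁` commutes with
multiplication by `c`, the equation for `A₁ ∘ F ∘ A₂` becomes the one for `F` with
`b ↦ A₁⁻¹ (b + c A₁ 0)`. Both reindexings are bijections and the first fixes `0`, so the two
families of solution counts, and hence their maxima, coincide.
-/

section AffineMaps

variable {G H : Type*} [AddCommGroup G] [AddCommGroup H]

theorem map_add_eq_of_sub_map_zero_additive {A : G → H}
    (hA : ∀ x y, A (x + y) - A 0 = (A x - A 0) + (A y - A 0)) (x a : G) :
    A (x + a) = A x + (A a - A 0) := by
  linear_combination (norm := abel_nf) hA x a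

theorem map_neg_sub_map_zero_of_sub_map_zero_additive {A : G → H}
    (hA : ∀ x y, A (x + y) - A 0 = (A x - A 0) + (A y - A 0)) (x : G) :
    A (-x) - A 0 = -(A x - A 0) := by
  have h := hA x (-x)
  rw [add_neg_cancel, sub_self] at h
  linear_combination (norm := abel_nf) -h

end AffineMaps

theorem map_sub_mul_of_sub_map_zero_additive {R : Type*} [CommRing R] {A : R → R} {γ : R}
    (hA : ∀ x y, A (x + y) - A 0 = (A x - A 0) + (A y - A 0))
    (hγ : ∀ x, A (γ * x) - A 0 = γ * (A x - A 0)) (u v : R) :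
    A (u - γ * v) = A u - γ * A v + γ * A 0 := by
  rw [sub_eq_add_neg]
  linear_combination hA u (-(γ * v)) + map_neg_sub_map_zero_of_sub_map_zero_additive hA (γ * v)
    - hγ v

theorem natCard_sub_mul_comp_eq {K L : Type*} [AddCommGroup K] [CommRing L] (F : K → L) (γ : L)
    (A₁ : L ≃ L) (hA₁add : ∀ x y, A₁ (x + y) - A₁ 0 = (A₁ x - A₁ 0) + (A₁ y - A₁ 0))
    (hA₁γ : ∀ x, A₁ (γ * x) - A₁ 0 = γ * (A₁ x - A₁ 0))
    (A₂ : K ≃ K) (hA₂add : ∀ x y, A₂ (x + y) - A₂ 0 = (A₂ x - A₂ 0) + (A₂ y - A₂ 0))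
    (a : K) (b : L) :
    Nat.card {x : K // A₁ (F (A₂ (x + a))) - γ * A₁ (F (A₂ x)) = b} =
      Nat.card {y : K // F (y + (A₂ a - A₂ 0)) - γ * F y = A₁.symm (b + γ * A₁ 0)} := by
  refine Nat.card_congr (A₂.subtypeEquiv fun x => ?_)
  rw [map_add_eq_of_sub_map_zero_additive hA₂add, Equiv.eq_symm_apply,
    map_sub_mul_of_sub_map_zero_additive hA₁add hA₁γ]
  constructor <;> intro h <;> linear_combination h

theorem setOf_exists_eq_of_equiv {α β : Type*} (Q : α → Prop) (N N' : α → β → ℕ)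
    (φ : α ≃ α) (ψ : β ≃ β) (hQ : ∀ a, Q (φ a) ↔ Q a) (hN : ∀ a b, N' a b = N (φ a) (ψ b)) :
    {m | ∃ a b, Q a ∧ m = N a b} = {m | ∃ a b, Q a ∧ m = N' a b} := by
  ext m
  constructor
  · rintro ⟨a, b, hQa, rfl⟩
    refine ⟨φ.symm a, ψ.symm b, (hQ _).1 (by simpa using hQa), ?_⟩
    simp [hN]
  · rintro ⟨a, b, hQa, rfl⟩
    exact ⟨φ a, ψ b, (hQ a).2 hQa, hN a b⟩

theorem c1_equiv_preserves_c_diff_uniformity_general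
    (K L F0 : Type) [Field K] [Field L] [Field F0]
    (κ : F0 →+* L) (c : F0)
    (F F' : K → L)
    (A₁ : L → L) (hA₁bij : Function.Bijective A₁)
    (hA₁add : ∀ x y : L, A₁ (x + y) - A₁ 0 = (A₁ x - A₁ 0) + (A₁ y - A₁ 0))
    (hA₁c : ∀ x : L, A₁ (κ c * x) - A₁ 0 = κ c * (A₁ x - A₁ 0))
    (A₂ : K → K) (hA₂bij : Function.Bijective A₂)
    (hA₂add : ∀ x y : K, A₂ (x + y) - A₂ 0 = (A₂ x - A₂ 0) + (A₂ y - A₂ 0))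
    (hF' : ∀ x : K, F' x = A₁ (F (A₂ x))) :
    sSup {m : ℕ | ∃ (a : K) (b : L), (c = 1 → a ≠ 0) ∧
        m = Nat.card {x : K // F (x + a) - κ c * F x = b}} =
    sSup {m : ℕ | ∃ (a : K) (b : L), (c = 1 → a ≠ 0) ∧
        m = Nat.card {x : K // F' (x + a) - κ c * F' x = b}} := by
  obtain rfl : F' = fun x => A₁ (F (A₂ x)) := funext hF'
  let e₁ := Equiv.ofBijective A₁ hA₁bij
  let e₂ := Equiv.ofBijective A₂ hA₂bij
  let shift : K ≃ K := e₂.trans (Equiv.subRight (A₂ 0))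
  let target : L ≃ L := (Equiv.addRight (κ c * A₁ 0)).trans e₁.symm
  have shift_eq_zero_iff (a : K) : shift a = 0 ↔ a = 0 := by
    simp [shift, sub_eq_zero, e₂, hA₂bij.injective.eq_iff]
  congr 1
  exact setOf_exists_eq_of_equiv _ _ _ shift target
    (fun a => imp_congr_right fun _ => (shift_eq_zero_iff a).not)
    (natCard_sub_mul_comp_eq F (κ c) e₁ hA₁add hA₁c e₂ hA₂add)

/-- c1-equivalent functions (F' = A₁ ∘ F ∘ A₂ with A₁ a c-affine permutation
and A₂ an affine permutation) have equal c-differential uniformity. -/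
theorem c1_equiv_preserves_c_diff_uniformity (p n s : ℕ) (hp : p.Prime) (hn : 0 < n)
    (hs : 0 < s)
    (K L F0 : Type) [Field K] [Fintype K] [Field L] [Fintype L] [Field F0] [Fintype F0]
    (hK : Fintype.card K = p ^ n) (hL : Fintype.card L = p ^ s)
    (hF0 : Fintype.card F0 = p ^ (Nat.gcd n s))
    (ι : F0 →+* K) (κ : F0 →+* L) (c : F0) (hc : c ≠ 0)
    (F F' : K → L)
    (A₁ : L → L) (hA₁bij : Function.Bijective A₁)
    (hA₁add : ∀ x y : L, A₁ (x + y) - A₁ 0 = (A₁ x - A₁ 0) + (A₁ y - A₁ 0))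
    (hA₁c : ∀ x : L, A₁ (κ c * x) - A₁ 0 = κ c * (A₁ x - A₁ 0))
    (A₂ : K → K) (hA₂bij : Function.Bijective A₂)
    (hA₂add : ∀ x y : K, A₂ (x + y) - A₂ 0 = (A₂ x - A₂ 0) + (A₂ y - A₂ 0))
    (hF' : ∀ x : K, F' x = A₁ (F (A₂ x))) :
    sSup {m : ℕ | ∃ (a : K) (b : L), (c = 1 → a ≠ 0) ∧
        m = Nat.card {x : K // F (x + a) - κ c * F x = b}} =
    sSup {m : ℕ | ∃ (a : K) (b : L), (c = 1 → a ≠ 0) ∧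
        m = Nat.card {x : K // F' (x + a) - κ c * F' x = b}} :=
  c1_equiv_preserves_c_diff_uniformity_general K L F0 κ c F F' A₁ hA₁bij hA₁add hA₁c A₂ hA₂bij
    hA₂add hF'
end

section
/- Let p be any prime, m ≥ 1, d = p^m + 1, and c ∈ F_{p^{gcd(m,n)}}^× with c ≠ 1, viewed inside F_{p^n}. Then for all x ∈ F_{p^n}: (cx+1)^d − c x^d = (c² − c)·(x + 1/(c−1))^d + 1/(1−c). Consequently the cc-differential uniformity of F(x) = x^d on F_{p^n} equals gcd(d, p^n − 1). -/
/-! Write q = p^m. The map x ↦ x^q is additive and fixes c, so (cx + a)^{q+1} − c x^{q+1} is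
a quadratic form in (x, x^q) that completes to (c² − c)(x + a/(c − 1))^{q+1} + a^{q+1}/(1 − c).
Every fiber of the c-differential is therefore a translate of a fiber of y ↦ y^{q+1}. In a
finite field such a fiber is empty, {0}, or a coset of the (q+1)-th roots of unity, which form
a subgroup of order gcd(q + 1, |K| − 1) of the cyclic group Kˣ; the full count is attained at
a = 0, b = c² − c. -/

theorem pow_pow_eq_self_of_dvd {M : Type*} [Monoid M] {a : M} {p k m : ℕ}
    (ha : a ^ p ^ k = a) (hkm : k ∣ m) : a ^ p ^ m = a := by
  obtain ⟨t, rfl⟩ := hkm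
  induction t with
  | zero => simp
  | succ t ih => rw [Nat.mul_succ, pow_add, pow_mul, ih, ha]

theorem mul_add_pow_sub_mul_pow_eq {K : Type*} [Field K] {p m : ℕ} [ExpChar K p] {c : K}
    (hcq : c ^ p ^ m = c) (hc1 : c ≠ 1) (a x : K) :
    (c * x + a) ^ (p ^ m + 1) - c * x ^ (p ^ m + 1) =
      (c ^ 2 - c) * (x + a / (c - 1)) ^ (p ^ m + 1) + a ^ (p ^ m + 1) / (1 - c) := by
  have hc1' : c - 1 ≠ 0 := sub_ne_zero.mpr hc1
  have h1c : 1 - c ≠ 0 := sub_ne_zero.mpr hc1.symm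
  have hshift : (a / (c - 1)) ^ p ^ m = a ^ p ^ m / (c - 1) := by
    rw [div_pow, sub_pow_expChar_pow, hcq, one_pow]
  simp only [pow_succ, add_pow_expChar_pow, mul_pow, hcq, hshift]
  field_simp
  ring

theorem card_pow_eq_le_card_pow_eq_one {G₀ : Type*} [CommGroupWithZero G₀] [Finite G₀]
    {d : ℕ} (hd : d ≠ 0) (w : G₀) :
    Nat.card {y : G₀ // y ^ d = w} ≤ Nat.card {y : G₀ // y ^ d = 1} := by
  have hpos : 0 < Nat.card {y : G₀ // y ^ d = 1} :=
    Nat.card_pos_iff.mpr ⟨⟨⟨1, one_pow d⟩⟩, inferInstance⟩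
  rcases eq_or_ne w 0 with rfl | hw
  · have : Subsingleton {y : G₀ // y ^ d = 0} :=
      ⟨fun y z => Subtype.ext <|
        ((pow_eq_zero_iff hd).mp y.2).trans ((pow_eq_zero_iff hd).mp z.2).symm⟩
    exact (Finite.card_le_one_iff_subsingleton.mpr this).trans hpos
  by_cases hroot : ∃ y₀ : G₀, y₀ ^ d = w
  · obtain ⟨y₀, hy₀⟩ := hroot
    have hy₀0 : y₀ ≠ 0 := by rintro rfl; exact hw (hy₀ ▸ zero_pow hd)
    refine (Nat.card_congr (Equiv.subtypeEquiv (Equiv.mulRight₀ y₀⁻¹ (inv_ne_zero hy₀0))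
      fun y => ?_)).le
    show _ ↔ (y * y₀⁻¹) ^ d = 1
    rw [mul_pow, inv_pow, hy₀, mul_inv_eq_one₀ hw]
  · have : IsEmpty {y : G₀ // y ^ d = w} := ⟨fun y => hroot ⟨y, y.2⟩⟩
    simp

theorem card_pow_eq_one_eq_gcd {K : Type*} [Field K] [Fintype K] {d : ℕ} (hd : d ≠ 0) :
    Nat.card {y : K // y ^ d = 1} = Nat.gcd d (Fintype.card K - 1) := by
  have : NeZero d := ⟨hd⟩
  have hroots : {y : K // y ^ d = 1} ≃ rootsOfUnity d K :=
    ((Equiv.subtypeEquivRight fun _ => Polynomial.mem_nthRoots (Nat.pos_of_ne_zero hd)).symm.trans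
      (rootsOfUnityEquivNthRoots K d).symm)
  rw [Nat.card_congr hroots, rootsOfUnity_eq_ker, IsCyclic.card_powMonoidHom_ker, Nat.card_units,
    Nat.card_eq_fintype_card, Nat.gcd_comm]

theorem card_mul_add_pow_add_eq {K : Type*} [Field K] {A : K} (hA : A ≠ 0) (s B b : K) (d : ℕ) :
    Nat.card {x : K // A * (x + s) ^ d + B = b} = Nat.card {y : K // y ^ d = (b - B) / A} :=
  Nat.card_congr <| Equiv.subtypeEquiv (Equiv.addRight s) fun x => by
    rw [Equiv.coe_addRight, eq_div_iff hA, eq_sub_iff_add_eq, mul_comm]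

theorem gold_cc_uniformity_general (p n m : ℕ) (hp : p.Prime)
    (K : Type) [Field K] [Fintype K] (hK : Fintype.card K = p ^ n)
    (c : K) (hc0 : c ≠ 0) (hc1 : c ≠ 1) (hcsub : c ^ p ^ (Nat.gcd m n) = c) :
    (∀ x : K, (c * x + 1) ^ (p ^ m + 1) - c * x ^ (p ^ m + 1) =
      (c ^ 2 - c) * (x + 1 / (c - 1)) ^ (p ^ m + 1) + 1 / (1 - c)) ∧
    sSup {N : ℕ | ∃ a b : K,
        N = Nat.card {x : K // (c * x + a) ^ (p ^ m + 1) - c * x ^ (p ^ m + 1) = b}} =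
    Nat.gcd (p ^ m + 1) (p ^ n - 1) := by
  have : Fact p.Prime := ⟨hp⟩
  have : CharP K p := charP_of_card_eq_prime_pow hK
  have hcq : c ^ p ^ m = c := pow_pow_eq_self_of_dvd hcsub (Nat.gcd_dvd_left m n)
  have hA : c ^ 2 - c ≠ 0 := by
    rw [sq, ← mul_sub_one]
    exact mul_ne_zero hc0 (sub_ne_zero.mpr hc1)
  have hfiber (a b : K) :
      Nat.card {x : K // (c * x + a) ^ (p ^ m + 1) - c * x ^ (p ^ m + 1) = b} =
        Nat.card {y : K // y ^ (p ^ m + 1) = (b - a ^ (p ^ m + 1) / (1 - c)) / (c ^ 2 - c)} := by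
    simp_rw [mul_add_pow_sub_mul_pow_eq hcq hc1 a]
    exact card_mul_add_pow_add_eq hA _ _ _ _
  refine ⟨fun x => by simpa using mul_add_pow_sub_mul_pow_eq hcq hc1 1 x, ?_⟩
  rw [← hK, ← card_pow_eq_one_eq_gcd (Nat.succ_ne_zero _)]
  refine IsGreatest.csSup_eq ⟨⟨0, c ^ 2 - c, ?_⟩, ?_⟩
  · rw [hfiber, zero_pow (Nat.succ_ne_zero _), zero_div, sub_zero, div_self hA]
  · rintro N ⟨a, b, rfl⟩
    exact hfiber a b ▸ card_pow_eq_le_card_pow_eq_one (Nat.succ_ne_zero _) _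

/-- for d = p^m + 1 and c ≠ 1 in F_{p^{gcd(m,n)}}^×,
(cx+1)^d − c x^d = (c²−c)(x + 1/(c−1))^d + 1/(1−c), and the cc-differential uniformity of
x^d on F_{p^n} equals gcd(d, p^n − 1). -/
theorem gold_cc_uniformity (p n m : ℕ) (hp : p.Prime) (hn : 0 < n) (hm : 0 < m)
    (K : Type) [Field K] [Fintype K] (hK : Fintype.card K = p ^ n)
    (c : K) (hc0 : c ≠ 0) (hc1 : c ≠ 1) (hcsub : c ^ p ^ (Nat.gcd m n) = c) :
    (∀ x : K, (c * x + 1) ^ (p ^ m + 1) - c * x ^ (p ^ m + 1) =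
      (c ^ 2 - c) * (x + 1 / (c - 1)) ^ (p ^ m + 1) + 1 / (1 - c)) ∧
    sSup {N : ℕ | ∃ a b : K,
        N = Nat.card {x : K // (c * x + a) ^ (p ^ m + 1) - c * x ^ (p ^ m + 1) = b}} =
    Nat.gcd (p ^ m + 1) (p ^ n - 1) :=
  gold_cc_uniformity_general p n m hp K hK c hc0 hc1 hcsub
end

section
/- Let p be an odd prime, n a positive integer, c = −1 ∈ F_{p^n}, and F : F_{p^n} → F_{p^n}. If a, b ∈ F_{p^n} satisfy b ≠ 2F(a/2), then the number of solutions x of F(a − x) + F(x) = b is even. -/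
/-! The map `x ↦ a - x` is an involution of the solution set of `F (a - x) + F x = b`. Since
`2 ≠ 0` in a field of odd order, its only possible fixed point is `a / 2`, which is a solution
exactly when `b = 2 * F (a / 2)`. Otherwise the solutions split into pairs `{x, a - x}`. -/

theorem Function.Involutive.even_natCard {α : Type*} [Finite α] {f : α → α}
    (hf : Function.Involutive f) (hfix : ∀ x, f x ≠ x) : Even (Nat.card α) := by
  classical
  have := Fintype.ofFinite α
  have hmod := Equiv.Perm.card_fixedPoints_modEq (f := f) (p := 2) (n := 1)
    (hp := ⟨Nat.prime_two⟩) (funext hf)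
  have : IsEmpty (Function.fixedPoints f) := ⟨fun x => hfix x x.2⟩
  rw [Fintype.card_eq_zero (α := Function.fixedPoints f)] at hmod
  rw [Nat.card_eq_fintype_card]
  exact Nat.even_iff.mpr hmod

theorem FiniteField.two_ne_zero_of_card_eq_pow {K : Type*} [Field K] [Fintype K] {p n : ℕ}
    (hp : p.Prime) (hp2 : p ≠ 2) (hK : Fintype.card K = p ^ n) : (2 : K) ≠ 0 := by
  refine Ring.two_ne_zero fun hchar => hp2 ?_
  have h2card : 2 ∣ p ^ n :=
    hK ▸ Nat.dvd_of_mod_eq_zero (FiniteField.even_card_iff_char_two.mp hchar)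
  exact ((Nat.prime_dvd_prime_iff_eq Nat.prime_two hp).mp
    (Nat.prime_two.dvd_of_dvd_pow h2card)).symm

theorem even_natCard_apply_sub_add_apply_eq {K : Type*} [Field K] [Finite K] (h2 : (2 : K) ≠ 0)
    (F : K → K) {a b : K} (hb : b ≠ 2 * F (a / 2)) :
    Even (Nat.card {x : K // F (a - x) + F x = b}) := by
  have : NeZero (2 : K) := ⟨h2⟩
  refine Function.Involutive.even_natCard
    (f := fun x => ⟨a - x, by rw [sub_sub_cancel, add_comm]; exact x.2⟩)
    (fun x => Subtype.ext (sub_sub_cancel a x)) ?_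
  rintro ⟨x, hx⟩ hfix
  have hx2 : x = a / 2 := by
    rw [eq_div_iff h2]
    linear_combination -congrArg Subtype.val hfix
  subst hx2
  rw [sub_half, ← two_mul] at hx
  exact hb hx.symm

theorem cc_neg_one_count_even_general (p n : ℕ) (hp : p.Prime) (hodd : p ≠ 2)
    (K : Type) [Field K] [Fintype K] (hK : Fintype.card K = p ^ n)
    (F : K → K) (a b : K) (hb : b ≠ 2 * F (a / 2)) :
    Even (Nat.card {x : K // F (a - x) + F x = b}) :=
  even_natCard_apply_sub_add_apply_eq (FiniteField.two_ne_zero_of_card_eq_pow hp hodd hK) F hb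

/-- for p odd, c = −1, if b ≠ 2F(a/2) then the number of solutions of
F(a−x) + F(x) = b is even. -/
theorem cc_neg_one_count_even (p n : ℕ) (hp : p.Prime) (hodd : p ≠ 2) (hn : 0 < n)
    (K : Type) [Field K] [Fintype K] (hK : Fintype.card K = p ^ n)
    (F : K → K) (a b : K) (hb : b ≠ 2 * F (a / 2)) :
    Even (Nat.card {x : K // F (a - x) + F x = b}) :=
  cc_neg_one_count_even_general p n hp hodd K hK F a b hb
end

section
/- Let m ≥ 4 be even and gcd(m, i) = 1, and work over F_{2^m}. Define F₁(x) = x + Tr(x^{2^i+1}) where Tr is the absolute trace from F_{2^m} to F_2. Then F₁ is an involution: F₁(F₁(x)) = x for all x ∈ F_{2^m}. -/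
/-!
Over a field of characteristic 2 in which `y ^ 2 ^ m = y`, the trace `Tr` is additive with values
in `{0, 1}`, it is invariant under `y ↦ y ^ 2 ^ i`, and `Tr 1 = m = 0` for even `m`. Expanding
`(x + 1) ^ (2 ^ i + 1) = x ^ (2 ^ i + 1) + x ^ 2 ^ i + x + 1` then shows that
`f x = Tr (x ^ (2 ^ i + 1))` satisfies `f (x + 1) = f x`. Since `f x ∈ {0, 1}`, this gives
`f (x + f x) = f x`, so `F₁ (F₁ x) = x + f x + f x = x`.
-/

open Finset

theorem Function.involutive_add_of_periodic {R : Type*} [Ring R] [CharP R 2] {f : R → R}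
    (hf : ∀ x, f x = 0 ∨ f x = 1) (hper : Function.Periodic f 1) :
    Function.Involutive fun x ↦ x + f x := by
  intro x
  have hfix : f (x + f x) = f x := by
    rcases hf x with h | h <;> rw [h]
    · rwa [add_zero]
    · exact (hper x).trans h
  simp only [hfix, add_assoc, CharTwo.add_self_eq_zero, add_zero]

def absTrace {R : Type*} [Semiring R] (m : ℕ) (y : R) : R :=
  ∑ j ∈ range m, y ^ 2 ^ j

section absTrace

variable {R : Type*} [CommRing R] [CharP R 2] {m : ℕ}

theorem absTrace_add (a b : R) : absTrace m (a + b) = absTrace m a + absTrace m b := by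
  simp only [absTrace, ← sum_add_distrib, add_pow_char_pow]

theorem absTrace_one_of_even (hm : Even m) : absTrace m (1 : R) = 0 := by
  obtain ⟨k, rfl⟩ := hm
  simp [absTrace, ← two_mul, CharTwo.two_eq_zero]

theorem sq_absTrace (y : R) : absTrace m y ^ 2 = absTrace m (y ^ 2) := by
  simp only [absTrace, sum_pow_char, ← pow_mul, mul_comm]

theorem absTrace_sq {y : R} (hy : y ^ 2 ^ m = y) : absTrace m (y ^ 2) = absTrace m y := by
  have shift := (sum_range_succ' (fun j ↦ y ^ 2 ^ j) m).symm.trans (sum_range_succ _ m)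
  rw [hy, pow_zero, pow_one] at shift
  rw [← sq_absTrace, absTrace, sum_pow_char]
  simpa only [← pow_mul, ← pow_succ] using add_right_cancel shift

theorem absTrace_pow_two_pow {y : R} (hy : y ^ 2 ^ m = y) (i : ℕ) :
    absTrace m (y ^ 2 ^ i) = absTrace m y := by
  induction i generalizing y with
  | zero => rw [pow_zero, pow_one]
  | succ i ih =>
    rw [pow_succ, pow_mul, absTrace_sq (by rw [pow_right_comm, hy]), ih hy]

theorem isIdempotentElem_absTrace {y : R} (hy : y ^ 2 ^ m = y) :
    IsIdempotentElem (absTrace m y) := by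
  rw [IsIdempotentElem, ← sq, sq_absTrace, absTrace_sq hy]

theorem absTrace_add_one_pow_two_pow_add_one {x : R} (hx : x ^ 2 ^ m = x) (hm : Even m)
    (i : ℕ) :
    absTrace m ((x + 1) ^ (2 ^ i + 1)) = absTrace m (x ^ (2 ^ i + 1)) := by
  have expand : (x + 1) ^ (2 ^ i + 1) = x ^ (2 ^ i + 1) + (x ^ 2 ^ i + x) + 1 := by
    rw [pow_succ, add_pow_char_pow, one_pow]
    ring
  rw [expand, absTrace_add, absTrace_add, absTrace_add, absTrace_pow_two_pow hx,
    CharTwo.add_self_eq_zero, absTrace_one_of_even hm, add_zero, add_zero]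

end absTrace

theorem F1_involution_general (m i : ℕ) (hme : Even m)
    (K : Type) [Field K] [Fintype K] (hK : Fintype.card K = 2 ^ m)
    (Tr : K → K) (hTr : ∀ y : K, Tr y = ∑ j ∈ Finset.range m, y ^ 2 ^ j)
    (F₁ : K → K) (hF₁ : ∀ x : K, F₁ x = x + Tr (x ^ (2 ^ i + 1))) :
    ∀ x : K, F₁ (F₁ x) = x := by
  have : CharP K 2 := charP_of_card_eq_prime_pow hK
  have hfrob : ∀ y : K, y ^ 2 ^ m = y := fun y ↦ hK ▸ FiniteField.pow_card y
  obtain rfl : Tr = absTrace m := funext hTr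
  obtain rfl : F₁ = fun x ↦ x + absTrace m (x ^ (2 ^ i + 1)) := funext hF₁
  refine Function.involutive_add_of_periodic (fun x ↦ ?_) (fun x ↦ ?_)
  · exact IsIdempotentElem.iff_eq_zero_or_one.mp (isIdempotentElem_absTrace (hfrob _))
  · exact absTrace_add_one_pow_two_pow_add_one (hfrob x) hme i

/-- over F_{2^m} with m ≥ 4 even and gcd(m,i) = 1, the map
F₁(x) = x + Tr(x^{2^i+1}) is an involution. -/
theorem F1_involution (m i : ℕ) (hm : 4 ≤ m) (hme : Even m) (hgcd : Nat.gcd m i = 1)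
    (K : Type) [Field K] [Fintype K] (hK : Fintype.card K = 2 ^ m)
    (Tr : K → K) (hTr : ∀ y : K, Tr y = ∑ j ∈ Finset.range m, y ^ 2 ^ j)
    (F₁ : K → K) (hF₁ : ∀ x : K, F₁ x = x + Tr (x ^ (2 ^ i + 1))) :
    ∀ x : K, F₁ (F₁ x) = x :=
  F1_involution_general m i hme K hK Tr hTr F₁ hF₁
end
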